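/- Let d be a positive integer, let α, σ be positive real numbers, and let μ be a probability measure on ℝ^d with finite second moment (∫ ‖y‖² dμ(y) < ∞). For x ∈ ℝ^d define v(x, y) = exp(-‖x − α·y‖² / (2σ²)), V(x) = ∫ v(x, y) dμ(y), and m(x) = (1/V(x))·∫ v(x, y)·y dμ(y). Then V(x) > 0 for all x, the function x ↦ log V(x) is differentiable on ℝ^d, and its gradient at every x equals -(1/σ²)·( x − α·m(x) ). -/

import Mathlib

/-!
Every quantity in sight is dominated by a constant: the kernel `v(x, y)` lies in `(0, 1]`, and its
`x`-derivative `-(1/σ²) v(x, y) ⟪x - α y, ·⟫` has norm at most `2/σ` because `t e^{-t²/(2σ²)} ≤ 2σ`.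
Against a finite measure one may therefore differentiate `V` under the integral sign, and the chain
rule for `log` gives `∇ log V(x) = -(1/σ²) (V(x) x - α ∫ v(x, y) y dμ(y)) / V(x)`. The last
integral converges because `v(x, y) α y = v(x, y) x - v(x, y) (x - α y)` is a difference of
bounded integrands.
-/

open MeasureTheory Real

theorem mul_exp_neg_sq_div_le {σ : ℝ} (hσ : 0 < σ) (t : ℝ) :
    t * exp (-t ^ 2 / (2 * σ ^ 2)) ≤ 2 * σ := by
  rw [neg_div, exp_neg, ← div_eq_mul_inv, div_le_iff₀ (exp_pos _)]
  calc t ≤ 2 * σ * (t ^ 2 / (2 * σ ^ 2) + 1) := by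
        rw [show 2 * σ * (t ^ 2 / (2 * σ ^ 2) + 1) = (t ^ 2 + 2 * σ ^ 2) / σ by field_simp]
        rw [le_div_iff₀ hσ]
        nlinarith [sq_nonneg (t - σ)]
    _ ≤ 2 * σ * exp (t ^ 2 / (2 * σ ^ 2)) := by gcongr; exact add_one_le_exp _

section GaussKernel

variable {E : Type*} [NormedAddCommGroup E] [InnerProductSpace ℝ E]

noncomputable def gaussKernel (α σ : ℝ) (x y : E) : ℝ :=
  exp (-‖x - α • y‖ ^ 2 / (2 * σ ^ 2))

variable {α σ : ℝ}

theorem gaussKernel_pos (x y : E) : 0 < gaussKernel α σ x y := exp_pos _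

theorem gaussKernel_le_one (x y : E) : gaussKernel α σ x y ≤ 1 :=
  exp_le_one_iff.mpr (div_nonpos_of_nonpos_of_nonneg (by simp) (by positivity))

theorem norm_gaussKernel_smul_sub_le (hσ : 0 < σ) (x y : E) :
    ‖gaussKernel α σ x y • (x - α • y)‖ ≤ 2 * σ := by
  rw [norm_smul, norm_of_nonneg (gaussKernel_pos x y).le, mul_comm]
  exact mul_exp_neg_sq_div_le hσ _

@[fun_prop]
theorem continuous_gaussKernel (x : E) : Continuous (gaussKernel α σ x) := by
  unfold gaussKernel; fun_prop

theorem hasFDerivAt_gaussKernel (y x : E) :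
    HasFDerivAt (gaussKernel α σ · y)
      ((-(σ ^ 2)⁻¹) • innerSL ℝ (gaussKernel α σ x y • (x - α • y))) x := by
  have h := (((hasFDerivAt_id x).sub_const (α • y)).norm_sq.const_mul (-(2 * σ ^ 2)⁻¹)).exp
  convert h using 1
  · ext z; simp only [gaussKernel, id_eq]; ring_nf
  · ext h
    simp only [gaussKernel, id_eq, smul_apply, innerSL_apply_apply,
      ContinuousLinearMap.comp_id, smul_eq_mul, real_inner_smul_left]
    ring_nf

variable [MeasurableSpace E] [BorelSpace E] {μ : Measure E} [IsFiniteMeasure μ]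

theorem integrable_gaussKernel (x : E) : Integrable (gaussKernel α σ x) μ :=
  (integrable_const (1 : ℝ)).mono' (continuous_gaussKernel x).aestronglyMeasurable
    (.of_forall fun y => by
      rw [norm_of_nonneg (gaussKernel_pos x y).le]; exact gaussKernel_le_one x y)

theorem integral_gaussKernel_pos [NeZero μ] (x : E) : 0 < ∫ y, gaussKernel α σ x y ∂μ :=
  integral_exp_pos (integrable_gaussKernel x)

variable [SecondCountableTopology E]

theorem integrable_gaussKernel_smul_sub (hσ : 0 < σ) (x : E) :
    Integrable (fun y => gaussKernel α σ x y • (x - α • y)) μ :=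
  (integrable_const (2 * σ)).mono' (by fun_prop)
    (.of_forall (norm_gaussKernel_smul_sub_le hσ x))

theorem integral_gaussKernel_smul_sub [CompleteSpace E] (hσ : 0 < σ) (x : E) :
    ∫ y, gaussKernel α σ x y • (x - α • y) ∂μ =
      (∫ y, gaussKernel α σ x y ∂μ) • x - α • ∫ y, gaussKernel α σ x y • y ∂μ := by
  have hy : Integrable (fun y => α • (gaussKernel α σ x y • y)) μ :=
    (((integrable_gaussKernel x).smul_const x).sub (integrable_gaussKernel_smul_sub hσ x)).congr
      (.of_forall fun y => by simp only [Pi.sub_apply]; module)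
  calc ∫ y, gaussKernel α σ x y • (x - α • y) ∂μ
      = ∫ y, (gaussKernel α σ x y • x - α • (gaussKernel α σ x y • y)) ∂μ := by
        congr 1; ext y; module
    _ = _ := by
        rw [integral_sub ((integrable_gaussKernel x).smul_const x) hy, integral_smul_const,
          integral_smul]

theorem hasFDerivAt_integral_gaussKernel [CompleteSpace E] (hσ : 0 < σ) (x : E) :
    HasFDerivAt (fun x => ∫ y, gaussKernel α σ x y ∂μ)
      ((-(σ ^ 2)⁻¹) • innerSL ℝ (∫ y, gaussKernel α σ x y • (x - α • y) ∂μ)) x := by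
  have hbound : ∀ x y : E,
      ‖(-(σ ^ 2)⁻¹) • innerSL ℝ (gaussKernel α σ x y • (x - α • y))‖ ≤ (σ ^ 2)⁻¹ * (2 * σ) := by
    intro x y
    rw [norm_smul, innerSL_apply_norm, norm_neg, norm_of_nonneg (by positivity)]
    gcongr
    exact norm_gaussKernel_smul_sub_le hσ x y
  have h := hasFDerivAt_integral_of_dominated_of_fderiv_le (μ := μ) (x₀ := x)
    (F' := fun x y => (-(σ ^ 2)⁻¹) • innerSL ℝ (gaussKernel α σ x y • (x - α • y)))
    Filter.univ_mem (.of_forall fun x => (continuous_gaussKernel x).aestronglyMeasurable)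
    (integrable_gaussKernel x) (by fun_prop) (.of_forall fun y x _ => hbound x y)
    (integrable_const _) (.of_forall fun y x _ => hasFDerivAt_gaussKernel y x)
  rwa [integral_smul, (innerSL ℝ).integral_comp_comm (integrable_gaussKernel_smul_sub hσ x)] at h

theorem hasGradientAt_log_integral_gaussKernel [CompleteSpace E] [NeZero μ] (hσ : 0 < σ)
    (x : E) :
    HasGradientAt (fun x => log (∫ y, gaussKernel α σ x y ∂μ))
      ((-(1 / σ ^ 2)) •
        (x - α • (∫ y, gaussKernel α σ x y ∂μ)⁻¹ • ∫ y, gaussKernel α σ x y • y ∂μ)) x := by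
  have hV := (integral_gaussKernel_pos (μ := μ) (α := α) (σ := σ) x).ne'
  rw [hasGradientAt_iff_hasFDerivAt]
  refine ((hasFDerivAt_integral_gaussKernel hσ x).log hV).congr_fderiv
    (ContinuousLinearMap.ext fun h => ?_)
  simp only [InnerProductSpace.toDual_apply_apply, smul_apply,
    innerSL_apply_apply, integral_gaussKernel_smul_sub hσ x, smul_eq_mul, real_inner_smul_left,
    inner_sub_left]
  field_simp

end GaussKernel

theorem gradient_log_density_general_general
    (d : ℕ) (α σ : ℝ) (hσ : 0 < σ)
    (μ : Measure (EuclideanSpace ℝ (Fin d))) [IsProbabilityMeasure μ]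
    (v : EuclideanSpace ℝ (Fin d) → EuclideanSpace ℝ (Fin d) → ℝ)
    (V : EuclideanSpace ℝ (Fin d) → ℝ)
    (m : EuclideanSpace ℝ (Fin d) → EuclideanSpace ℝ (Fin d))
    (hv : ∀ x y, v x y = Real.exp (-‖x - α • y‖ ^ 2 / (2 * σ ^ 2)))
    (hV : ∀ x, V x = ∫ y, v x y ∂μ)
    (hm : ∀ x, m x = (V x)⁻¹ • ∫ y, v x y • y ∂μ) :
    (∀ x, 0 < V x) ∧ Differentiable ℝ (fun x => Real.log (V x)) ∧
      ∀ x, gradient (fun z => Real.log (V z)) x =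
        (-(1 / σ ^ 2)) • (x - α • m x) := by
  obtain rfl : v = gaussKernel α σ := funext fun x => funext (hv x)
  obtain rfl : V = fun x => ∫ y, gaussKernel α σ x y ∂μ := funext hV
  obtain rfl : m = fun x => (∫ y, gaussKernel α σ x y ∂μ)⁻¹ • ∫ y, gaussKernel α σ x y • y ∂μ :=
    funext hm
  have hgrad := hasGradientAt_log_integral_gaussKernel (α := α) (μ := μ) hσ
  exact ⟨integral_gaussKernel_pos, fun x => (hgrad x).differentiableAt, fun x => (hgrad x).gradient⟩

/-- general setting: the gradient of `x ↦ log V(x)` with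
`V(x) = ∫ v(x,y) dμ(y)` equals `-(1/σ²) • (x − α • m(x))`, where `m(x)` is the
posterior mean. -/
theorem gradient_log_density_general
    (d : ℕ) (hd : 0 < d) (α σ : ℝ) (hα : 0 < α) (hσ : 0 < σ)
    (μ : Measure (EuclideanSpace ℝ (Fin d))) [IsProbabilityMeasure μ]
    (hmom : Integrable (fun y => ‖y‖ ^ 2) μ)
    (v : EuclideanSpace ℝ (Fin d) → EuclideanSpace ℝ (Fin d) → ℝ)
    (V : EuclideanSpace ℝ (Fin d) → ℝ)
    (m : EuclideanSpace ℝ (Fin d) → EuclideanSpace ℝ (Fin d))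
    (hv : ∀ x y, v x y = Real.exp (-‖x - α • y‖ ^ 2 / (2 * σ ^ 2)))
    (hV : ∀ x, V x = ∫ y, v x y ∂μ)
    (hm : ∀ x, m x = (V x)⁻¹ • ∫ y, v x y • y ∂μ) :
    (∀ x, 0 < V x) ∧ Differentiable ℝ (fun x => Real.log (V x)) ∧
      ∀ x, gradient (fun z => Real.log (V z)) x =
        (-(1 / σ ^ 2)) • (x - α • m x) :=
  gradient_log_density_general_general d α σ hσ μ v V m hv hV hm
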